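/- For any integer b ≥ 2, there exist infinitely many positive integers t such that the b-Cullen number t·b^t + 1 is a b-Sierpiński number. -/

import Mathlib

/-- An integer `m` is composite if `m > 1` and `m` is not prime. -/
def IsComposite (m : ℤ) : Prop := 1 < m ∧ ¬ Prime m

/-- `k` is a `b`-Sierpiński number: a positive integer with `gcd (k+1) (b-1) = 1`
such that `k * b ^ n + 1` is composite for all positive integers `n`. -/
def IsBSierpinski (b k : ℤ) : Prop :=
  0 < k ∧ Int.gcd (k + 1) (b - 1) = 1 ∧ ∀ n : ℕ, 0 < n → IsComposite (k * b ^ n + 1)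

/-- `k` is a `b`-Riesel number: a positive integer with `gcd (k-1) (b-1) = 1`
such that `k * b ^ n - 1` is composite for all positive integers `n`. -/
def IsBRiesel (b k : ℤ) : Prop :=
  0 < k ∧ Int.gcd (k - 1) (b - 1) = 1 ∧ ∀ n : ℕ, 0 < n → IsComposite (k * b ^ n - 1)

/-- `k` is a `b`-Brier number: both `b`-Sierpiński and `b`-Riesel. -/
def IsBBrier (b k : ℤ) : Prop := IsBSierpinski b k ∧ IsBRiesel b k

/-!
Sierpiński's covering argument, applied to the multipliers `k = t * b ^ t + 1`. Take a covering
`{c i mod e i}` of `ℕ` and primes `q i` with `q i ∣ b ^ e i - 1`. If `t ≡ -1` modulo `b - 1` and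
every `e i`, then `b ^ t ≡ b⁻¹ (mod q i)`, so `t ≡ -b * (b ^ (e i - c i) + 1) (mod q i)` forces
`q i ∣ k * b ^ n + 1` whenever `n ≡ c i (mod e i)`. For `b ≥ 3` we take for `q i` a prime factor,
prime to `6`, of the cyclotomic value `Φ_(e i)(b)`: the multiplicative order of `b` modulo it is
exactly `e i`, so these primes are distinct and prime to `6 * (b - 1)`, and the Chinese remainder
theorem yields a whole residue class of admissible `t`. For `b = 2` an explicit class is used.
-/

open Polynomial Function

lemma isComposite_of_dvd {m d : ℤ} (hd : 1 < d) (hdm : d ∣ m) (hlt : d < m) : IsComposite m := by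
  refine ⟨hd.trans hlt, fun hm => ?_⟩
  rw [Int.prime_iff_natAbs_prime] at hm
  rcases hm.eq_one_or_self_of_dvd _ (Int.natAbs_dvd_natAbs.2 hdm) with h | h <;> omega

lemma Int.natCast_dvd_pow_sub_one_iff {q : ℕ} {b : ℤ} {n : ℕ} :
    (q : ℤ) ∣ b ^ n - 1 ↔ (b : ZMod q) ^ n = 1 := by
  rw [← ZMod.intCast_eq_intCast_iff_dvd_sub, eq_comm]
  push_cast
  rfl

lemma Int.exists_forall_dvd_sub {ι : Type*} [Finite ι] {m : ι → ℤ}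
    (hm : Pairwise (IsCoprime on m)) (r : ι → ℤ) : ∃ x, ∀ i, m i ∣ x - r i := by
  have hI : Pairwise (IsCoprime on fun i => Ideal.span {m i}) := fun i j hij =>
    (Ideal.isCoprime_span_singleton_iff _ _).2 (hm hij)
  obtain ⟨x, hx⟩ := Ideal.exists_forall_sub_mem_ideal hI r
  exact ⟨x, fun i => Ideal.mem_span_singleton.1 (hx i)⟩

lemma infinite_setOf_dvd_natCast_sub {M : ℤ} (hM : M ≠ 0) (x : ℤ) :
    {t : ℕ | M ∣ t - x}.Infinite := by
  refine (Nat.frequently_atTop_iff_infinite.1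
    (Nat.frequently_modEq (Int.natAbs_ne_zero.2 hM) (x % M).toNat)).mono fun t ht => ?_
  have h1 : M ∣ x % M - t := by
    simpa [Int.toNat_of_nonneg (Int.emod_nonneg x hM), Int.natAbs_dvd] using
      Nat.modEq_iff_dvd.1 ht
  have h2 : M ∣ x - x % M := ⟨x / M, by rw [Int.emod_def]; ring⟩
  have h3 := dvd_add h2 h1
  rwa [show x - x % M + (x % M - t) = -(t - x) by ring, dvd_neg] at h3

lemma exists_mod_eq_of_forall_lt {ι : Type*} {e c : ι → ℕ} {L : ℕ} (hL : 0 < L)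
    (he : ∀ i, e i ∣ L) (h : ∀ r < L, ∃ i, r % e i = c i) (n : ℕ) : ∃ i, n % e i = c i :=
  (h (n % L) (Nat.mod_lt n hL)).imp fun i hi => by rwa [Nat.mod_mod_of_dvd n (he i)] at hi

lemma dvd_cullen_mul_pow_add_one {b : ℤ} {e c d t n : ℕ} (hd : (d : ℤ) ∣ b ^ e - 1)
    (het : e ∣ t + 1) (hn : n % e = c) (hdt : (d : ℤ) ∣ t + b * (b ^ (e - c) + 1)) :
    (d : ℤ) ∣ (t * b ^ t + 1) * b ^ n + 1 := by
  rw [Int.natCast_dvd_pow_sub_one_iff] at hd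
  rw [← ZMod.intCast_zmod_eq_zero_iff_dvd] at hdt ⊢
  push_cast at hdt ⊢
  set β : ZMod d := (b : ZMod d)
  have hce : c < e := hn ▸ Nat.mod_lt n (Nat.pos_of_dvd_of_pos het t.succ_pos)
  obtain ⟨m, hm⟩ := het
  have hβt : β * β ^ t = 1 := by rw [← pow_succ', hm, pow_mul, hd, one_pow]
  have hβn : β ^ n = β ^ c := by
    rw [← Nat.div_add_mod n e, pow_add, pow_mul, hd, one_pow, one_mul, hn]
  have hβc : β ^ (e - c) * β ^ c = 1 := by rw [← pow_add, Nat.sub_add_cancel hce.le, hd]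
  rw [hβn]
  linear_combination β ^ t * β ^ c * hdt - (β ^ (e - c) + 1) * β ^ c * hβt - hβc

section Covering

variable {ι : Type*} {b : ℤ} {e c d : ι → ℕ}

theorem isBSierpinski_cullen_of_covering (hb : 2 ≤ b) (hcov : ∀ n, ∃ i, n % e i = c i)
    (hd : ∀ i, 1 < d i) (hde : ∀ i, (d i : ℤ) ∣ b ^ e i - 1) {t : ℕ} (ht : 0 < t)
    (htb : b - 1 ∣ t + 1) (hte : ∀ i, e i ∣ t + 1)
    (htd : ∀ i, (d i : ℤ) ∣ t + b * (b ^ (e i - c i) + 1)) :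
    IsBSierpinski b (t * b ^ t + 1) := by
  have hbt : 0 < b ^ t := by positivity
  refine ⟨by positivity, ?_, fun n hn => ?_⟩
  · obtain ⟨m, hm⟩ : b - 1 ∣ t * b ^ t + 1 + 1 - 1 := by
      have h := dvd_add (dvd_mul_of_dvd_right (sub_one_dvd_pow_sub_one b t) (t : ℤ)) htb
      rwa [show (t : ℤ) * (b ^ t - 1) + (t + 1) = t * b ^ t + 1 + 1 - 1 by ring] at h
    rw [← Int.isCoprime_iff_gcd_eq_one, show (t : ℤ) * b ^ t + 1 + 1 = 1 + (b - 1) * m by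
      linear_combination hm]
    exact isCoprime_one_left.add_mul_left_left m
  obtain ⟨i, hi⟩ := hcov n
  refine isComposite_of_dvd (by exact_mod_cast hd i)
    (dvd_cullen_mul_pow_add_one (hde i) (hte i) hi (htd i)) ?_
  have hei : e i ≤ t + 1 := Nat.le_of_dvd t.succ_pos (hte i)
  have hde' : (d i : ℤ) ≤ b ^ e i - 1 := Int.le_of_dvd (by
    have := one_lt_pow₀ (by omega : 1 < b) (Nat.pos_of_dvd_of_pos (hte i) t.succ_pos).ne'
    omega) (hde i)
  have hbe : b ^ e i ≤ b ^ t * b := pow_succ b t ▸ pow_le_pow_right₀ (by omega) hei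
  have hbn : b ≤ b ^ n := le_self_pow₀ (by omega) hn.ne'
  have hbtt : b ^ t ≤ t * b ^ t := le_mul_of_one_le_left hbt.le (by exact_mod_cast ht)
  nlinarith

theorem infinite_setOf_cullen_isBSierpinski_of_covering [Fintype ι] (hb : 2 ≤ b)
    (hcov : ∀ n, ∃ i, n % e i = c i) (hd : ∀ i, 1 < d i) (hde : ∀ i, (d i : ℤ) ∣ b ^ e i - 1)
    {L : ℕ} (hL0 : L ≠ 0) (hL : ∀ i, e i ∣ L) {x : ℤ} (hxL : (b - 1) * L ∣ x + 1)
    (hxd : ∀ i, (d i : ℤ) ∣ x + b * (b ^ (e i - c i) + 1)) :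
    {t : ℕ | 0 < t ∧ IsBSierpinski b (t * b ^ t + 1)}.Infinite := by
  set M : ℤ := (b - 1) * L * ∏ i, (d i : ℤ)
  have hM : M ≠ 0 := mul_ne_zero (mul_ne_zero (by omega) (by exact_mod_cast hL0))
    (Finset.prod_ne_zero_iff.2 fun i _ => by have := hd i; omega)
  refine ((infinite_setOf_dvd_natCast_sub hM x).sdiff (Set.finite_singleton 0)).mono ?_
  rintro t ⟨htx, ht0⟩
  have ht : 0 < t := Nat.pos_of_ne_zero ht0
  have htL : (b - 1) * L ∣ (t : ℤ) + 1 := by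
    rw [show (t : ℤ) + 1 = t - x + (x + 1) by ring]
    exact dvd_add ((dvd_mul_right _ _).trans htx) hxL
  refine ⟨ht, isBSierpinski_cullen_of_covering hb hcov hd hde ht
    ((dvd_mul_right _ _).trans htL) (fun i => ?_) fun i => ?_⟩
  · exact_mod_cast (dvd_mul_of_dvd_right (Int.natCast_dvd_natCast.2 (hL i)) _).trans htL
  · rw [show (t : ℤ) + _ = t - x + (x + b * (b ^ (e i - c i) + 1)) by ring]
    exact dvd_add (((Finset.dvd_prod_of_mem _ (Finset.mem_univ i)).trans
      (dvd_mul_left _ _)).trans htx) (hxd i)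

end Covering

lemma exists_cullen_residue {ι : Type*} [Finite ι] {b : ℤ} {L : ℕ} {e c q : ι → ℕ}
    (hq : ∀ i, (q i).Prime) (hqinj : Injective q) (hqL : ∀ i, IsCoprime ((b - 1) * L) (q i)) :
    ∃ x : ℤ, (b - 1) * L ∣ x + 1 ∧ ∀ i, (q i : ℤ) ∣ x + b * (b ^ (e i - c i) + 1) := by
  let m : Option ι → ℤ := fun o => o.elim ((b - 1) * L) fun i => q i
  have hm : Pairwise (IsCoprime on m) := by
    rintro (_ | i) (_ | j) hij
    · exact absurd rfl hij
    · exact hqL j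
    · exact (hqL i).symm
    · exact Nat.isCoprime_iff_coprime.2 <|
        (Nat.coprime_primes (hq i) (hq j)).2 fun h => hij (congrArg some (hqinj h))
  obtain ⟨x, hx⟩ := Int.exists_forall_dvd_sub hm
    fun o => o.elim (-1) fun i => -(b * (b ^ (e i - c i) + 1))
  exact ⟨x, by simpa [m] using hx none, fun i => by simpa [m] using hx (some i)⟩

lemma Nat.exists_prime_dvd_coprime_six {m : ℕ} (hm : 6 < m) (h4 : ¬ 4 ∣ m) (h9 : ¬ 9 ∣ m) :
    ∃ q, q.Prime ∧ q ∣ m ∧ q.Coprime 6 := by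
  have hg : m.gcd 6 ∣ m := Nat.gcd_dvd_left m 6
  have hr : (m / m.gcd 6).Coprime 6 := Nat.coprime_of_dvd fun p hp hpr hp6 => by
    have hpp := mul_dvd_mul (Nat.dvd_gcd (hpr.trans (Nat.div_dvd_of_dvd hg)) hp6) hpr
    rw [Nat.mul_div_cancel' hg] at hpp
    have : p ≤ 6 := Nat.le_of_dvd (by norm_num) hp6
    interval_cases p <;> simp_all +decide
  have hr1 : m / m.gcd 6 ≠ 1 := fun h => by
    have := Nat.le_of_dvd (by norm_num) (Nat.gcd_dvd_right m 6)
    have := Nat.div_mul_cancel hg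
    rw [h, one_mul] at this
    omega
  exact ⟨(m / m.gcd 6).minFac, Nat.minFac_prime hr1,
    (Nat.minFac_dvd _).trans (Nat.div_dvd_of_dvd hg), hr.coprime_dvd_left (Nat.minFac_dvd _)⟩

lemma isCoprime_sub_one_mul_six_pow {b : ℤ} {q : ℕ} (hq : q.Prime) (hq6 : q.Coprime 6)
    (hb : orderOf (b : ZMod q) ≠ 1) (n : ℕ) : IsCoprime ((b - 1) * 6 ^ n) q := by
  refine IsCoprime.mul_left ?_ ?_
  · refine (((Nat.prime_iff_prime_int.1 hq).irreducible.coprime_iff_not_dvd).2 fun h => hb ?_).symm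
    have := Int.natCast_dvd_pow_sub_one_iff.1 (by rwa [pow_one])
    rwa [pow_one, ← orderOf_eq_one_iff] at this
  · exact_mod_cast Nat.isCoprime_iff_coprime.2 (hq6.symm.pow_left n)

lemma Polynomial.cyclotomic_four (R : Type*) [CommRing R] : cyclotomic 4 R = X ^ 2 + 1 := by
  rw [show 4 = 2 * 2 from rfl, ← cyclotomic_expand_eq_cyclotomic Nat.prime_two dvd_rfl,
    cyclotomic_two, map_add, expand_X, map_one]

lemma natCast_dvd_cyclotomic_eval_iff {n k : ℕ} {y : ℤ} :
    (n : ℤ) ∣ (cyclotomic k ℤ).eval y ↔ (cyclotomic k (ZMod n)).eval (y : ZMod n) = 0 := by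
  rw [← map_cyclotomic_int k (ZMod n), eval_intCast_map, eq_intCast,
    ZMod.intCast_zmod_eq_zero_iff_dvd, Int.cast_id]

lemma exists_prime_dvd_cyclotomic_eval {k : ℕ} (hk : k = 3 ∨ k = 4 ∨ k = 6) {y : ℤ}
    (hy : 3 ≤ y) : ∃ q : ℕ, q.Prime ∧ q.Coprime 6 ∧ (q : ℤ) ∣ (cyclotomic k ℤ).eval y := by
  obtain ⟨h6, h4, h9⟩ : 6 < (cyclotomic k ℤ).eval y ∧
      (∀ z : ZMod 4, (cyclotomic k (ZMod 4)).eval z ≠ 0) ∧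
      (∀ z : ZMod 9, (cyclotomic k (ZMod 9)).eval z ≠ 0) := by
    rcases hk with rfl | rfl | rfl <;>
      simp only [cyclotomic_three, cyclotomic_four, cyclotomic_six, eval_add, eval_sub, eval_pow,
        eval_X, eval_one] <;>
      exact ⟨by nlinarith, by decide, by decide⟩
  have h4 : ¬ ((4 : ℕ) : ℤ) ∣ (cyclotomic k ℤ).eval y :=
    natCast_dvd_cyclotomic_eval_iff.not.2 (h4 _)
  have h9 : ¬ ((9 : ℕ) : ℤ) ∣ (cyclotomic k ℤ).eval y :=
    natCast_dvd_cyclotomic_eval_iff.not.2 (h9 _)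
  generalize (cyclotomic k ℤ).eval y = m at h6 h4 h9 ⊢
  lift m to ℕ using by omega
  obtain ⟨q, hq, hqm, hq6⟩ := Nat.exists_prime_dvd_coprime_six (by exact_mod_cast h6)
    (by exact_mod_cast h4) (by exact_mod_cast h9)
  exact ⟨q, hq, hq6, by exact_mod_cast hqm⟩

lemma orderOf_eq_mul_of_dvd_cyclotomic_eval {q k j : ℕ} [Fact q.Prime] {b : ℤ} (hk : 0 < k)
    (hqk : ¬ q ∣ k) (hj : 0 < j) (hjk : ∀ p, p.Prime → p ∣ j → p ∣ k)
    (hq : (q : ℤ) ∣ (cyclotomic k ℤ).eval (b ^ j)) : orderOf (b : ZMod q) = k * j := by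
  have : NeZero (k : ZMod q) := ⟨by rwa [Ne, ZMod.natCast_eq_zero_iff]⟩
  have hprim : IsPrimitiveRoot ((b : ZMod q) ^ j) k := by
    rw [← isRoot_cyclotomic_iff, IsRoot.def, ← Int.cast_pow, ← natCast_dvd_cyclotomic_eval_iff]
    exact hq
  refine orderOf_eq_of_pow_and_pow_div_prime (Nat.mul_pos hk hj)
    (by rw [mul_comm, pow_mul, hprim.pow_eq_one]) fun p hp hpkj => ?_
  have hpk : p ∣ k := (hp.dvd_mul.1 hpkj).elim id (hjk p hp)
  rw [← Nat.div_mul_right_comm hpk, mul_comm, pow_mul]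
  exact hprim.pow_ne_one_of_pos_of_lt (Nat.div_pos (Nat.le_of_dvd hk hpk) hp.pos).ne'
    (Nat.div_lt_self hk hp.one_lt)

lemma exists_prime_orderOf_eq_mul {b : ℤ} (hb : 3 ≤ b) {k j : ℕ} (hk : k = 3 ∨ k = 4 ∨ k = 6)
    (hj : 0 < j) (hjk : ∀ p, p.Prime → p ∣ j → p ∣ k) :
    ∃ q : ℕ, q.Prime ∧ q.Coprime 6 ∧ orderOf (b : ZMod q) = k * j := by
  obtain ⟨q, hq, hq6, hqb⟩ :=
    exists_prime_dvd_cyclotomic_eval hk (hb.trans (le_self_pow₀ (by omega) hj.ne'))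
  have := Fact.mk hq
  have hk36 : k ∣ 6 ^ 2 := by rcases hk with rfl | rfl | rfl <;> norm_num
  exact ⟨q, hq, hq6, orderOf_eq_mul_of_dvd_cyclotomic_eval (by omega)
    (fun hqk => (hq.coprime_iff_not_dvd.1 (hq6.pow_right 2)) (hqk.trans hk36)) hj hjk hqb⟩

def cov36Mod : Fin 7 → ℕ := ![2, 3, 4, 9, 12, 18, 36]
def cov36Res : Fin 7 → ℕ := ![0, 1, 3, 5, 9, 17, 29]
def cov36Prime : Fin 7 → ℕ := ![3, 7, 5, 73, 13, 19, 37]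

theorem infinite_setOf_cullen_isBSierpinski_two :
    {t : ℕ | 0 < t ∧ IsBSierpinski 2 (t * 2 ^ t + 1)}.Infinite :=
  infinite_setOf_cullen_isBSierpinski_of_covering (e := cov36Mod) (c := cov36Res)
    (d := cov36Prime) le_rfl
    (exists_mod_eq_of_forall_lt (L := 36) (by norm_num) (by decide) (by decide))
    (by decide) (by decide) (L := 36) (by norm_num) (by decide)
    -- a solution of the congruences by the Chinese remainder theorem; the moduli `36` and `3` are
    -- not coprime, but both conditions give `t ≡ 2 (mod 3)`
    (x := 291402899) (by norm_num) (by decide)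

-- The covering `{c mod e}` with `e = 3, 4, 6, 8, 9, 12, 16, 18, 24, 36, 48`, each modulus split as
-- `e = k * j` with `k ∈ {3, 4, 6}` and `rad j ∣ k`, so that `Φ_e(b) = Φ_k(b ^ j)`.
def cov48Cyc : Fin 11 → ℕ := ![3, 4, 6, 4, 3, 6, 4, 6, 6, 6, 6]
def cov48Exp : Fin 11 → ℕ := ![1, 1, 1, 2, 3, 2, 4, 3, 4, 6, 8]
def cov48Mod (i : Fin 11) : ℕ := cov48Cyc i * cov48Exp i
def cov48Res : Fin 11 → ℕ := ![0, 1, 2, 7, 4, 10, 11, 16, 19, 28, 35]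

theorem infinite_setOf_cullen_isBSierpinski_of_three_le {b : ℤ} (hb : 3 ≤ b) :
    {t : ℕ | 0 < t ∧ IsBSierpinski b (t * b ^ t + 1)}.Infinite := by
  have hprime (i : Fin 11) :
      ∃ q : ℕ, q.Prime ∧ q.Coprime 6 ∧ orderOf (b : ZMod q) = cov48Mod i :=
    exists_prime_orderOf_eq_mul hb (by revert i; decide) (by revert i; decide) fun p hp hpj =>
      hp.dvd_of_dvd_pow (hpj.trans ((by decide : ∀ i, cov48Exp i ∣ cov48Cyc i ^ 3) i))
  choose q hq hq6 hqb using hprime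
  have hqinj : Injective q := fun i j h => by
    have := hqb i
    rw [h, hqb j] at this
    exact (by decide : Injective cov48Mod) this.symm
  obtain ⟨x, hx1, hx2⟩ := exists_cullen_residue (L := 6 ^ 4) (e := cov48Mod) (c := cov48Res) hq
    hqinj fun i => isCoprime_sub_one_mul_six_pow (hq i) (hq6 i) (by rw [hqb]; revert i; decide) 4
  exact infinite_setOf_cullen_isBSierpinski_of_covering (by omega)
    (exists_mod_eq_of_forall_lt (L := 144) (by norm_num) (by decide) (by decide +kernel))
    (fun i => (hq i).one_lt)
    (fun i => Int.natCast_dvd_pow_sub_one_iff.2 (hqb i ▸ pow_orderOf_eq_one _))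
    (by norm_num) (by decide) hx1 hx2

theorem infinitely_many_cullen_b_sierpinski (b : ℤ) (hb : 2 ≤ b) :
    {t : ℕ | 0 < t ∧ IsBSierpinski b ((t : ℤ) * b ^ t + 1)}.Infinite := by
  rcases hb.eq_or_lt with rfl | hb
  · exact infinite_setOf_cullen_isBSierpinski_two
  · exact infinite_setOf_cullen_isBSierpinski_of_three_le hb
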